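/- arXiv:math/0609692 — 4 statements merged into one kernel-verified Lean document; each statement's English description precedes it below -/
import Mathlib

section
/- Let n ≥ 1, 1 ≤ p, q ≤ ∞ with 1/p + 1/q ≥ 1, and let α, β ∈ ℝ satisfy α + β = -n/p' - n/q' and α < -n/p'. Then for all f ∈ L^p(ℝ^n) and g ∈ L^q(ℝ^n), the integral ∬_{|y| ≤ C|x|} |x|^α |y|^β |f(x)| |g(y)| dx dy is bounded by a constant (depending on α, β, p, q, n, C) times ‖f‖_{L^p} ‖g‖_{L^q}. -/
open MeasureTheory ENNReal Set

/-!
Cut `x` and `y` into the dyadic shells `2 ^ j ≤ ‖x‖ < 2 ^ (j + 1)`. On one shell, Hölder's inequality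
gives `∫ ‖x‖ ^ γ ‖f x‖ ≲ 2 ^ (j (γ + n / p')) ‖f‖_{L^p(shell j)}`, so with `ε = -(α + n / p') > 0`
the scaling condition bounds the contribution of the pair of shells `(j, k)` by
`2 ^ (-(j - k) ε) ‖f‖_{L^p(shell j)} ‖g‖_{L^q(shell k)}`, and the cone `‖y‖ ≤ C₀ ‖x‖` only meets
pairs with `k ≤ j + c`. For a fixed difference `j - k`, the sum over `j` is at most `‖f‖_p ‖g‖_q`
by Hölder's inequality in `ℓ^p × ℓ^p'` and the embedding `ℓ^q ⊆ ℓ^p'` (this is where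
`1 / p + 1 / q ≥ 1` enters); the geometric series in `j - k` then converges.
-/

section CountingMeasure

open Measure

variable {ι : Type*} [MeasurableSpace ι] [MeasurableSingletonClass ι]

lemma enorm_le_eLpNorm'_count {ε : Type*} [ENorm ε] (f : ι → ε) {p : ℝ} (hp : 0 < p) (i : ι) :
    ‖f i‖ₑ ≤ eLpNorm' f p count := by
  calc ‖f i‖ₑ = (‖f i‖ₑ ^ p) ^ (1 / p) := by rw [← rpow_mul, mul_one_div_cancel hp.ne', rpow_one]
    _ ≤ (∑' j, ‖f j‖ₑ ^ p) ^ (1 / p) := by gcongr; exact ENNReal.le_tsum i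
    _ = eLpNorm' f p count := by rw [eLpNorm', lintegral_count]

lemma eLpNorm'_count_antitone {ε : Type*} [ENorm ε] (f : ι → ε) {p q : ℝ} (hp : 0 < p)
    (hpq : p ≤ q) :
    eLpNorm' f q count ≤ eLpNorm' f p count := by
  set S := eLpNorm' f p count
  have hq : 0 < q := hp.trans_le hpq
  have hsum : ∑' i, ‖f i‖ₑ ^ q ≤ S ^ q :=
    calc ∑' i, ‖f i‖ₑ ^ q = ∑' i, ‖f i‖ₑ ^ p * ‖f i‖ₑ ^ (q - p) := by
          simp_rw [← rpow_add_of_nonneg _ _ hp.le (sub_nonneg.2 hpq), add_sub_cancel]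
      _ ≤ ∑' i, ‖f i‖ₑ ^ p * S ^ (q - p) := by
          gcongr with i
          exact enorm_le_eLpNorm'_count f hp i
      _ = S ^ q := by
          rw [ENNReal.tsum_mul_right, ← lintegral_count, lintegral_rpow_enorm_eq_rpow_eLpNorm' hp,
            ← rpow_add_of_nonneg _ _ hp.le (sub_nonneg.2 hpq), add_sub_cancel]
  calc eLpNorm' f q count = (∑' i, ‖f i‖ₑ ^ q) ^ (1 / q) := by rw [eLpNorm', lintegral_count]
    _ ≤ (S ^ q) ^ (1 / q) := by gcongr
    _ = S := by rw [← rpow_mul, mul_one_div_cancel hq.ne', rpow_one]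

lemma tsum_mul_le_eLpNorm_count_one_mul (a b : ι → ℝ≥0∞) {q : ℝ≥0∞} (hq : q ≠ 0) :
    ∑' i, a i * b i ≤ eLpNorm a 1 count * eLpNorm b q count :=
  calc ∑' i, a i * b i ≤ ∑' i, a i * eLpNorm b q count := by
        gcongr with i
        simpa using enorm_le_eLpNorm_count b i hq
    _ = eLpNorm a 1 count * eLpNorm b q count := by
        simp [ENNReal.tsum_mul_right, eLpNorm_one_eq_lintegral_enorm, lintegral_count]

lemma tsum_mul_le_eLpNorm_count_mul [Countable ι] {p q : ℝ≥0∞} (hp : 1 ≤ p) (hq : 1 ≤ q)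
    (hpq : 1 ≤ 1 / p + 1 / q) (a b : ι → ℝ≥0∞) :
    ∑' i, a i * b i ≤ eLpNorm a p count * eLpNorm b q count := by
  rcases hp.eq_or_lt with rfl | hp1
  · exact tsum_mul_le_eLpNorm_count_one_mul a b (by positivity)
  rcases hq.eq_or_lt with rfl | hq1
  · simpa only [mul_comm] using tsum_mul_le_eLpNorm_count_one_mul b a (by positivity)
  have hp_top : p ≠ ∞ := by
    rintro rfl
    simp only [one_div, inv_top, zero_add, ENNReal.one_le_inv] at hpq
    exact hq1.not_ge hpq
  have hq_top : q ≠ ∞ := by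
    rintro rfl
    simp only [one_div, inv_top, add_zero, ENNReal.one_le_inv] at hpq
    exact hp1.not_ge hpq
  have hP : 1 < p.toReal := by simpa using (toReal_lt_toReal one_ne_top hp_top).2 hp1
  have hQ : 0 < q.toReal := toReal_pos (by positivity) hq_top
  have hconj := Real.HolderConjugate.conjExponent hP
  have hPQ : q.toReal ≤ p.toReal.conjExponent := by
    have h : 1 ≤ p.toReal⁻¹ + q.toReal⁻¹ := by
      have := (toReal_le_toReal one_ne_top (by finiteness)).2 hpq
      rwa [toReal_add (by finiteness) (by finiteness), toReal_div, toReal_div, toReal_one,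
        one_div, one_div] at this
    have := hconj.inv_add_inv_eq_one
    rw [← inv_le_inv₀ hconj.symm.pos hQ]
    linarith
  calc ∑' i, a i * b i = ∫⁻ i, (a * b) i ∂count := (lintegral_count _).symm
    _ ≤ eLpNorm' a p.toReal count * eLpNorm' b p.toReal.conjExponent count := by
        simpa only [eLpNorm', enorm_eq_self] using ENNReal.lintegral_mul_le_Lp_mul_Lq _ hconj
          (measurable_of_countable a).aemeasurable (measurable_of_countable b).aemeasurable
    _ ≤ eLpNorm' a p.toReal count * eLpNorm' b q.toReal count := by
        gcongr
        exact eLpNorm'_count_antitone b hQ hPQ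
    _ = eLpNorm a p count * eLpNorm b q count := by
        rw [eLpNorm_eq_eLpNorm' (by positivity) hp_top, eLpNorm_eq_eLpNorm' (by positivity) hq_top]

lemma tsum_mul_comp_add_le_eLpNorm_count_mul {p q : ℝ≥0∞} (hp : 1 ≤ p) (hq : 1 ≤ q)
    (hpq : 1 ≤ 1 / p + 1 / q) (a b : ℤ → ℝ≥0∞) (s : ℤ) :
    ∑' j, a j * b (j + s) ≤ eLpNorm a p count * eLpNorm b q count := by
  have hshift : eLpNorm (fun j => b (j + s)) q count = eLpNorm b q count :=
    eLpNorm_comp_measurePreserving (measurable_of_countable b).aestronglyMeasurable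
      (measurePreserving_add_right _ s)
  simpa only [hshift] using tsum_mul_le_eLpNorm_count_mul hp hq hpq a (fun j => b (j + s))

lemma eLpNorm_count_eLpNorm_restrict_le {X ε : Type*} [MeasurableSpace X] [TopologicalSpace ε]
    [ContinuousENorm ε] [Countable ι] {μ : Measure X} {s : ι → Set X}
    (hs : ∀ i, MeasurableSet (s i)) (hd : Pairwise (Function.onFun Disjoint s)) (f : X → ε)
    (p : ℝ≥0∞) :
    eLpNorm (fun i => eLpNorm f p (μ.restrict (s i))) p count ≤ eLpNorm f p μ := by
  rcases eq_or_ne p 0 with rfl | hp0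
  · simp
  rcases eq_or_ne p ∞ with rfl | hp_top
  · rw [eLpNorm_exponent_top, eLpNormEssSup_count]
    exact iSup_le fun i =>
      (enorm_eq_self _).trans_le (eLpNorm_mono_measure f Measure.restrict_le_self)
  have hP : 0 < p.toReal := toReal_pos hp0 hp_top
  rw [eLpNorm_eq_eLpNorm' hp0 hp_top, eLpNorm_eq_eLpNorm' hp0 hp_top, eLpNorm', eLpNorm']
  gcongr
  calc ∫⁻ i, ‖eLpNorm f p (μ.restrict (s i))‖ₑ ^ p.toReal ∂count
      = ∑' i, ∫⁻ x in s i, ‖f x‖ₑ ^ p.toReal ∂μ := by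
        simp only [lintegral_count, enorm_eq_self, eLpNorm_eq_eLpNorm' hp0 hp_top,
          lintegral_rpow_enorm_eq_rpow_eLpNorm' hP]
    _ = ∫⁻ x in ⋃ i, s i, ‖f x‖ₑ ^ p.toReal ∂μ := (lintegral_iUnion hs hd _).symm
    _ ≤ ∫⁻ x, ‖f x‖ₑ ^ p.toReal ∂μ := setLIntegral_le_lintegral _ _

end CountingMeasure

lemma setLIntegral_enorm_le_eLpNorm_mul_measure_rpow {X ε : Type*} [MeasurableSpace X]
    [TopologicalSpace ε] [ContinuousENorm ε] {ν : Measure X} {f : X → ε} {p : ℝ≥0∞} (hp : 1 ≤ p)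
    (s : Set X) (hf : AEStronglyMeasurable f (ν.restrict s)) :
    ∫⁻ x in s, ‖f x‖ₑ ∂ν ≤ eLpNorm f p (ν.restrict s) * ν s ^ (1 - 1 / p).toReal := by
  have hexp : (1 - 1 / p).toReal = 1 / (1 : ℝ≥0∞).toReal - 1 / p.toReal := by
    rw [toReal_sub_of_le (by simpa using ENNReal.inv_le_one.2 hp) one_ne_top, toReal_div]
    simp
  rw [hexp]
  simpa [eLpNorm_one_eq_lintegral_enorm] using
    eLpNorm_le_eLpNorm_mul_rpow_measure_univ hp hf

section DyadicShell

variable {E : Type*} [NormedAddCommGroup E]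

def dyadicShell (j : ℤ) : Set E := (‖·‖) ⁻¹' Ico ((2 : ℝ) ^ j) (2 ^ (j + 1))

lemma measurableSet_dyadicShell [MeasurableSpace E] [OpensMeasurableSpace E] (j : ℤ) :
    MeasurableSet (dyadicShell j : Set E) :=
  measurable_norm measurableSet_Ico

lemma pairwise_disjoint_dyadicShell :
    Pairwise (Function.onFun Disjoint (dyadicShell : ℤ → Set E)) := fun i j hij => by
  have := (zpow_right_mono₀ (one_le_two : (1 : ℝ) ≤ 2)).pairwise_disjoint_on_Ico_succ hij
  simp only [Function.onFun, Order.succ_eq_add_one] at this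
  exact this.preimage _

lemma mem_dyadicShell_log {x : E} (hx : x ≠ 0) : x ∈ dyadicShell (Int.log 2 ‖x‖) := by
  have hx' : 0 < ‖x‖ := norm_pos_iff.2 hx
  constructor
  · exact_mod_cast Int.zpow_log_le_self one_lt_two hx'
  · exact_mod_cast Int.lt_zpow_succ_log_self one_lt_two ‖x‖

lemma ofReal_rpow_norm_le_of_mem_dyadicShell {x : E} {j : ℤ} (hx : x ∈ dyadicShell j) (γ : ℝ) :
    ENNReal.ofReal (‖x‖ ^ γ) ≤ 2 ^ |γ| * 2 ^ ((j : ℝ) * γ) := by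
  obtain ⟨hlow, hup⟩ := hx
  have h2j : (0 : ℝ) < 2 ^ j := zpow_pos two_pos j
  set t := ‖x‖ / 2 ^ j
  have ht1 : 1 ≤ t := (one_le_div h2j).2 hlow
  have ht2 : t ≤ 2 := (div_le_iff₀ h2j).2 (by rw [zpow_add_one₀ two_ne_zero] at hup; linarith)
  have hreal : ‖x‖ ^ γ ≤ 2 ^ |γ| * 2 ^ ((j : ℝ) * γ) :=
    calc ‖x‖ ^ γ = t ^ γ * 2 ^ ((j : ℝ) * γ) := by
          rw [Real.rpow_mul zero_le_two, Real.rpow_intCast, ← Real.mul_rpow (by positivity) h2j.le,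
            div_mul_cancel₀ _ h2j.ne']
      _ ≤ t ^ |γ| * 2 ^ ((j : ℝ) * γ) := by
          gcongr
          exact le_abs_self γ
      _ ≤ 2 ^ |γ| * 2 ^ ((j : ℝ) * γ) := by gcongr
  calc ENNReal.ofReal (‖x‖ ^ γ) ≤ ENNReal.ofReal (2 ^ |γ| * 2 ^ ((j : ℝ) * γ)) :=
        ofReal_le_ofReal hreal
    _ = 2 ^ |γ| * 2 ^ ((j : ℝ) * γ) := by
        rw [ofReal_mul (by positivity), ← ofReal_rpow_of_pos two_pos, ← ofReal_rpow_of_pos two_pos,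
          ofReal_ofNat]

lemma setOf_norm_le_mul_norm_subset {c : ℕ} {C₀ : ℝ} (hc : C₀ ≤ 2 ^ c) :
    {z : E × E | ‖z.2‖ ≤ C₀ * ‖z.1‖}
      ⊆ {z | z.2 = 0} ∪ ⋃ (m : ℕ) (j : ℤ), dyadicShell j ×ˢ dyadicShell (j + (c - m)) := by
  intro z hz
  by_cases hz₂ : z.2 = 0
  · exact Or.inl hz₂
  have hz₁ : z.1 ≠ 0 := by
    rintro h
    exact hz₂ (norm_le_zero_iff.1 (by simpa [h] using hz))
  have hx := mem_dyadicShell_log hz₁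
  have hy := mem_dyadicShell_log hz₂
  set j := Int.log 2 ‖z.1‖
  set k := Int.log 2 ‖z.2‖
  have hkj : k < j + c + 1 := by
    refine (zpow_lt_zpow_iff_right₀ (one_lt_two : (1 : ℝ) < 2)).1 ?_
    calc (2 : ℝ) ^ k ≤ ‖z.2‖ := hy.1
      _ ≤ 2 ^ c * ‖z.1‖ := hz.trans (by gcongr)
      _ < 2 ^ c * 2 ^ (j + 1) := by gcongr; exact hx.2
      _ = 2 ^ (j + c + 1) := by
        rw [← zpow_natCast, ← zpow_add₀ two_ne_zero]
        ring_nf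
  refine Or.inr (mem_iUnion₂.2 ⟨(j + c - k).toNat, j, hx, ?_⟩)
  convert hy using 2
  omega

lemma setLIntegral_prod_rpow_norm_mul_eq [MeasurableSpace E] [OpensMeasurableSpace E]
    (μ : Measure E) [SFinite μ] {F G : Type*} [NormedAddCommGroup F] [NormedAddCommGroup G]
    {f : E → F} {g : E → G} (hf : AEStronglyMeasurable f μ) (hg : AEStronglyMeasurable g μ)
    (α β : ℝ) (s t : Set E) :
    ∫⁻ z in s ×ˢ t, ENNReal.ofReal (‖z.1‖ ^ α * ‖z.2‖ ^ β * ‖f z.1‖ * ‖g z.2‖) ∂(μ.prod μ)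
      = (∫⁻ x in s, ENNReal.ofReal (‖x‖ ^ α * ‖f x‖) ∂μ)
        * ∫⁻ y in t, ENNReal.ofReal (‖y‖ ^ β * ‖g y‖) ∂μ := by
  have hf' : AEMeasurable (fun x => ENNReal.ofReal (‖x‖ ^ α * ‖f x‖)) (μ.restrict s) :=
    ((measurable_norm.pow_const α).aemeasurable.mul hf.restrict.norm.aemeasurable).ennreal_ofReal
  have hg' : AEMeasurable (fun y => ENNReal.ofReal (‖y‖ ^ β * ‖g y‖)) (μ.restrict t) :=
    ((measurable_norm.pow_const β).aemeasurable.mul hg.restrict.norm.aemeasurable).ennreal_ofReal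
  rw [← Measure.prod_restrict, ← lintegral_prod_mul hf' hg']
  congr 1 with z
  rw [← ofReal_mul (by positivity)]
  ring_nf

lemma setLIntegral_cone_le_tsum_dyadicShell_prod [MeasurableSpace E] [OpensMeasurableSpace E]
    (μ : Measure E) [SFinite μ] [NullSingletonClass μ] {c : ℕ} {C₀ : ℝ} (hc : C₀ ≤ 2 ^ c)
    (Φ : E × E → ℝ≥0∞) :
    ∫⁻ z in {z : E × E | ‖z.2‖ ≤ C₀ * ‖z.1‖}, Φ z ∂(μ.prod μ)
      ≤ ∑' (m : ℕ) (j : ℤ),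
          ∫⁻ z in dyadicShell j ×ˢ dyadicShell (j + (c - m)), Φ z ∂(μ.prod μ) := by
  have hnull : (μ.prod μ) {z : E × E | z.2 = 0} = 0 := by
    rw [show {z : E × E | z.2 = 0} = univ ×ˢ {0} by ext; simp, Measure.prod_prod,
      measure_singleton, mul_zero]
  calc ∫⁻ z in {z : E × E | ‖z.2‖ ≤ C₀ * ‖z.1‖}, Φ z ∂(μ.prod μ)
      ≤ ∫⁻ z in {z | z.2 = 0} ∪ ⋃ (m : ℕ) (j : ℤ), dyadicShell j ×ˢ dyadicShell (j + (c - m)),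
          Φ z ∂(μ.prod μ) :=
        lintegral_mono_set (setOf_norm_le_mul_norm_subset hc)
    _ = ∫⁻ z in ⋃ (m : ℕ) (j : ℤ), dyadicShell j ×ˢ dyadicShell (j + (c - m)), Φ z ∂(μ.prod μ) :=
        setLIntegral_congr (union_ae_eq_right_of_ae_eq_empty (ae_eq_empty.2 hnull))
    _ ≤ _ :=
        (lintegral_iUnion_le _ _).trans (ENNReal.tsum_le_tsum fun m => lintegral_iUnion_le _ _)

lemma tsum_eLpNorm_dyadicShell_mul_le [MeasurableSpace E] [OpensMeasurableSpace E]
    (μ : Measure E) {F G : Type*} [NormedAddCommGroup F] [NormedAddCommGroup G] {p q : ℝ≥0∞}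
    (hp : 1 ≤ p) (hq : 1 ≤ q) (hpq : 1 ≤ 1 / p + 1 / q) (f : E → F) (g : E → G) (s : ℤ) :
    ∑' j, eLpNorm f p (μ.restrict (dyadicShell j)) * eLpNorm g q (μ.restrict (dyadicShell (j + s)))
      ≤ eLpNorm f p μ * eLpNorm g q μ :=
  (tsum_mul_comp_add_le_eLpNorm_count_mul hp hq hpq _ _ s).trans <| mul_le_mul'
    (eLpNorm_count_eLpNorm_restrict_le measurableSet_dyadicShell pairwise_disjoint_dyadicShell f p)
    (eLpNorm_count_eLpNorm_restrict_le measurableSet_dyadicShell pairwise_disjoint_dyadicShell g q)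

variable [NormedSpace ℝ E] [MeasurableSpace E] [BorelSpace E] [FiniteDimensional ℝ E]
  (μ : Measure E) [μ.IsAddHaarMeasure]

lemma measure_dyadicShell_le (j : ℤ) :
    μ (dyadicShell j) ≤ 2 ^ (((j : ℝ) + 1) * Module.finrank ℝ E) * μ (Metric.ball 0 1) :=
  calc μ (dyadicShell j) ≤ μ (Metric.ball 0 (2 ^ (j + 1))) :=
        measure_mono fun x hx => mem_ball_zero_iff.2 hx.2
    _ = 2 ^ (((j : ℝ) + 1) * Module.finrank ℝ E) * μ (Metric.ball 0 1) := by
        rw [Measure.addHaar_ball_of_pos μ 0 (zpow_pos two_pos _), ← Real.rpow_intCast,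
          ← Real.rpow_mul_natCast zero_le_two, ← ofReal_rpow_of_pos two_pos, ofReal_ofNat]
        push_cast
        rfl

lemma exists_setLIntegral_dyadicShell_le {F : Type*} [NormedAddCommGroup F] {p : ℝ≥0∞}
    (hp : 1 ≤ p) (γ : ℝ) :
    ∃ K : ℝ≥0∞, K ≠ ∞ ∧ ∀ f : E → F, AEStronglyMeasurable f μ → ∀ j : ℤ,
      ∫⁻ x in dyadicShell j, ENNReal.ofReal (‖x‖ ^ γ * ‖f x‖) ∂μ
        ≤ K * 2 ^ ((j : ℝ) * (γ + Module.finrank ℝ E * (1 - 1 / p).toReal))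
          * eLpNorm f p (μ.restrict (dyadicShell j)) := by
  set n : ℝ := (Module.finrank ℝ E : ℝ)
  set e := (1 - 1 / p).toReal
  set V := μ (Metric.ball 0 1)
  have he : 0 ≤ e := toReal_nonneg
  refine ⟨2 ^ |γ| * 2 ^ (n * e) * V ^ e, by finiteness, fun f hf j => ?_⟩
  have hpow : (2 : ℝ≥0∞) ^ ((j : ℝ) * γ) * 2 ^ (((j : ℝ) + 1) * n * e)
      = 2 ^ (n * e) * 2 ^ ((j : ℝ) * (γ + n * e)) := by
    rw [← rpow_add _ _ two_ne_zero ofNat_ne_top, ← rpow_add _ _ two_ne_zero ofNat_ne_top]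
    ring_nf
  calc ∫⁻ x in dyadicShell j, ENNReal.ofReal (‖x‖ ^ γ * ‖f x‖) ∂μ
      ≤ ∫⁻ x in dyadicShell j, 2 ^ |γ| * 2 ^ ((j : ℝ) * γ) * ‖f x‖ₑ ∂μ := by
        refine setLIntegral_mono' (measurableSet_dyadicShell j) fun x hx => ?_
        rw [ofReal_mul (by positivity), ofReal_norm]
        gcongr
        exact ofReal_rpow_norm_le_of_mem_dyadicShell hx γ
    _ = 2 ^ |γ| * 2 ^ ((j : ℝ) * γ) * ∫⁻ x in dyadicShell j, ‖f x‖ₑ ∂μ :=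
        lintegral_const_mul' _ _ (by finiteness)
    _ ≤ 2 ^ |γ| * 2 ^ ((j : ℝ) * γ)
          * (eLpNorm f p (μ.restrict (dyadicShell j)) * μ (dyadicShell j) ^ e) := by
        gcongr
        exact setLIntegral_enorm_le_eLpNorm_mul_measure_rpow hp _ hf.restrict
    _ ≤ 2 ^ |γ| * 2 ^ ((j : ℝ) * γ)
          * (eLpNorm f p (μ.restrict (dyadicShell j)) * (2 ^ (((j : ℝ) + 1) * n) * V) ^ e) := by
        gcongr
        exact measure_dyadicShell_le μ j
    _ = 2 ^ |γ| * V ^ e * (2 ^ ((j : ℝ) * γ) * 2 ^ (((j : ℝ) + 1) * n * e))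
          * eLpNorm f p (μ.restrict (dyadicShell j)) := by
        rw [mul_rpow_of_nonneg _ _ he, ← rpow_mul]
        ring
    _ = 2 ^ |γ| * 2 ^ (n * e) * V ^ e * 2 ^ ((j : ℝ) * (γ + n * e))
          * eLpNorm f p (μ.restrict (dyadicShell j)) := by
        rw [hpow]
        ring

theorem exists_lintegral_cone_le [Nontrivial E] {F G : Type*} [NormedAddCommGroup F]
    [NormedAddCommGroup G] {p q : ℝ≥0∞} (hp : 1 ≤ p) (hq : 1 ≤ q) (hpq : 1 ≤ 1 / p + 1 / q)
    {α β : ℝ}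
    (hscal : α + β = -(Module.finrank ℝ E * (1 - 1 / p).toReal)
      - (Module.finrank ℝ E * (1 - 1 / q).toReal))
    (hα : α < -(Module.finrank ℝ E * (1 - 1 / p).toReal)) (C₀ : ℝ) :
    ∃ C : ℝ≥0∞, C ≠ ∞ ∧ ∀ (f : E → F) (g : E → G),
      AEStronglyMeasurable f μ → AEStronglyMeasurable g μ →
      ∫⁻ z in {z : E × E | ‖z.2‖ ≤ C₀ * ‖z.1‖},
          ENNReal.ofReal (‖z.1‖ ^ α * ‖z.2‖ ^ β * ‖f z.1‖ * ‖g z.2‖) ∂(μ.prod μ)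
        ≤ C * eLpNorm f p μ * eLpNorm g q μ := by
  obtain ⟨Kf, hKf, hf_shell⟩ := exists_setLIntegral_dyadicShell_le μ (F := F) hp α
  obtain ⟨Kg, hKg, hg_shell⟩ := exists_setLIntegral_dyadicShell_le μ (F := G) hq β
  obtain ⟨c, hc⟩ := pow_unbounded_of_one_lt C₀ (one_lt_two : (1 : ℝ) < 2)
  set ε := -(α + Module.finrank ℝ E * (1 - 1 / p).toReal)
  have hε : 0 < ε := by linarith
  have hαε : α + Module.finrank ℝ E * (1 - 1 / p).toReal = -ε := by ring
  have hβε : β + Module.finrank ℝ E * (1 - 1 / q).toReal = ε := by linarith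
  set r : ℝ≥0∞ := 2 ^ (-ε)
  have hr : r < 1 := rpow_lt_one_of_one_lt_of_neg one_lt_two (neg_neg_of_pos hε)
  set K := Kf * Kg * 2 ^ ((c : ℝ) * ε) with hK
  refine ⟨K * (1 - r)⁻¹, mul_ne_top (by finiteness) (inv_ne_top.2 (tsub_pos_of_lt hr).ne'),
    fun f g hf hg => ?_⟩
  set Ff := fun j => eLpNorm f p (μ.restrict (dyadicShell j))
  set Gg := fun k => eLpNorm g q (μ.restrict (dyadicShell k))
  have hterm (m : ℕ) (j : ℤ) :
      ∫⁻ z in dyadicShell j ×ˢ dyadicShell (j + (c - m)),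
          ENNReal.ofReal (‖z.1‖ ^ α * ‖z.2‖ ^ β * ‖f z.1‖ * ‖g z.2‖) ∂(μ.prod μ)
        ≤ K * r ^ m * (Ff j * Gg (j + (c - m))) := by
    have hpow : (2 : ℝ≥0∞) ^ ((j : ℝ) * -ε) * 2 ^ (((j + (c - m) : ℤ) : ℝ) * ε)
        = 2 ^ ((c : ℝ) * ε) * r ^ m := by
      rw [← rpow_natCast, ← rpow_mul, ← rpow_add _ _ two_ne_zero ofNat_ne_top,
        ← rpow_add _ _ two_ne_zero ofNat_ne_top]
      push_cast
      ring_nf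
    rw [setLIntegral_prod_rpow_norm_mul_eq μ hf hg]
    calc _ ≤ (Kf * 2 ^ ((j : ℝ) * -ε) * Ff j)
            * (Kg * 2 ^ (((j + (c - m) : ℤ) : ℝ) * ε) * Gg (j + (c - m))) := by
          rw [← hαε, ← hβε]
          exact mul_le_mul' (hf_shell f hf j) (hg_shell g hg _)
      _ = Kf * Kg * (2 ^ ((j : ℝ) * -ε) * 2 ^ (((j + (c - m) : ℤ) : ℝ) * ε))
            * (Ff j * Gg (j + (c - m))) := by ring
      _ = K * r ^ m * (Ff j * Gg (j + (c - m))) := by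
          rw [hpow, hK]
          ring
  calc _ ≤ ∑' (m : ℕ) (j : ℤ), ∫⁻ z in dyadicShell j ×ˢ dyadicShell (j + (c - m)),
          ENNReal.ofReal (‖z.1‖ ^ α * ‖z.2‖ ^ β * ‖f z.1‖ * ‖g z.2‖) ∂(μ.prod μ) :=
        setLIntegral_cone_le_tsum_dyadicShell_prod μ hc.le _
    _ ≤ ∑' (m : ℕ) (j : ℤ), K * r ^ m * (Ff j * Gg (j + (c - m))) :=
        ENNReal.tsum_le_tsum fun m => ENNReal.tsum_le_tsum fun j => hterm m j
    _ ≤ ∑' m : ℕ, K * r ^ m * (eLpNorm f p μ * eLpNorm g q μ) := by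
        simp_rw [ENNReal.tsum_mul_left]
        gcongr with m
        exact tsum_eLpNorm_dyadicShell_mul_le μ hp hq hpq f g _
    _ = K * (1 - r)⁻¹ * eLpNorm f p μ * eLpNorm g q μ := by
        rw [ENNReal.tsum_mul_right, ENNReal.tsum_mul_left, tsum_geometric]
        ring

end DyadicShell

theorem stmt1_general (n : ℕ) (hn : 1 ≤ n) (p q : ℝ≥0∞) (hp : 1 ≤ p) (hq : 1 ≤ q)
    (hpq : 1 ≤ 1/p + 1/q) (α β : ℝ)
    (hscal : α + β = -((n : ℝ) * (1 - 1/p).toReal) - ((n : ℝ) * (1 - 1/q).toReal))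
    (hα : α < -((n : ℝ) * (1 - 1/p).toReal)) (C₀ : ℝ) :
    ∃ C : ℝ, 0 < C ∧ ∀ (f g : EuclideanSpace ℝ (Fin n) → ℂ),
      MemLp f p volume → MemLp g q volume →
      ∫⁻ z in {z : EuclideanSpace ℝ (Fin n) × EuclideanSpace ℝ (Fin n) | ‖z.2‖ ≤ C₀ * ‖z.1‖},
          ENNReal.ofReal (‖z.1‖ ^ α * ‖z.2‖ ^ β * ‖f z.1‖ * ‖g z.2‖)
        ≤ ENNReal.ofReal C * eLpNorm f p volume * eLpNorm g q volume := by
  have : Nonempty (Fin n) := ⟨⟨0, hn⟩⟩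
  obtain ⟨C, hC, hbound⟩ := exists_lintegral_cone_le (volume : Measure (EuclideanSpace ℝ (Fin n)))
    (F := ℂ) (G := ℂ) hp hq hpq (by simpa using hscal) (by simpa using hα) C₀
  refine ⟨C.toReal + 1, by positivity, fun f g hf hg => ?_⟩
  have hC_le : C ≤ ENNReal.ofReal (C.toReal + 1) := by
    rw [ofReal_add toReal_nonneg zero_le_one, ofReal_toReal hC, ofReal_one]
    exact le_self_add
  rw [Measure.volume_eq_prod]
  exact (hbound f g hf.1 hg.1).trans (by gcongr)

theorem stmt1 (n : ℕ) (hn : 1 ≤ n) (p q : ℝ≥0∞) (hp : 1 ≤ p) (hq : 1 ≤ q)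
    (hpq : 1 ≤ 1/p + 1/q) (α β : ℝ)
    (hscal : α + β = -((n : ℝ) * (1 - 1/p).toReal) - ((n : ℝ) * (1 - 1/q).toReal))
    (hα : α < -((n : ℝ) * (1 - 1/p).toReal)) (C₀ : ℝ) (hC₀ : 0 < C₀) :
    ∃ C : ℝ, 0 < C ∧ ∀ (f g : EuclideanSpace ℝ (Fin n) → ℂ),
      MemLp f p volume → MemLp g q volume →
      ∫⁻ z in {z : EuclideanSpace ℝ (Fin n) × EuclideanSpace ℝ (Fin n) | ‖z.2‖ ≤ C₀ * ‖z.1‖},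
          ENNReal.ofReal (‖z.1‖ ^ α * ‖z.2‖ ^ β * ‖f z.1‖ * ‖g z.2‖)
        ≤ ENNReal.ofReal C * eLpNorm f p volume * eLpNorm g q volume :=
  stmt1_general n hn p q hp hq hpq α β hscal hα C₀
end

section
/- Let n ≥ 3 and let ε > 0 be sufficiently small (depending on n). Define a(x) := ⟨x⟩ - ε⟨x⟩^{1-ε} on ℝ^n, where ⟨x⟩ = (1+|x|²)^{1/2}. Then -ΔΔa(x) ≳_ε ⟨x⟩^{-(3+ε)} for all x ∈ ℝ^n. -/
/-! Every power `⟨x⟩ ^ q` of `⟨x⟩ = √(1 + |x|²)` is a function of `1 + |x|²`, and the radial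
form of the Laplacian gives `Δ ⟨x⟩ ^ q = q (q + n - 2) ⟨x⟩ ^ (q - 2) - q (q - 2) ⟨x⟩ ^ (q - 4)`.
Iterating, `-ΔΔ a` pairs each of `⟨x⟩⁻³, ⟨x⟩⁻⁵, ⟨x⟩⁻⁷` (from `⟨x⟩`) with the same power times
`⟨x⟩ ^ (-ε)` (from `-ε ⟨x⟩ ^ (1 - ε)`). As `⟨x⟩ ≥ 1`, each pair is bounded below by its
`ε`-shifted power times the sum of the two coefficients; for `0 < ε < 1` these sums are
`> 0, ≥ 0, ≥ 0`. When `n = 3` the leading one is positive only thanks to the `ε`-term. -/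

open MeasureTheory

noncomputable section

/-- The Laplacian of a function on `ℝⁿ`, as a sum of second directional derivatives
along the coordinate directions. -/
def lap {n : ℕ} (f : EuclideanSpace ℝ (Fin n) → ℝ) (x : EuclideanSpace ℝ (Fin n)) : ℝ :=
  ∑ i : Fin n, fderiv ℝ (fun y => fderiv ℝ f y (EuclideanSpace.single i 1)) x
    (EuclideanSpace.single i 1)

/-- The weight `a(x) = ⟨x⟩ - ε⟨x⟩^{1-ε}`. -/
def aWeight {n : ℕ} (ε : ℝ) (x : EuclideanSpace ℝ (Fin n)) : ℝ :=
  Real.sqrt (1 + ‖x‖ ^ 2) - ε * Real.sqrt (1 + ‖x‖ ^ 2) ^ (1 - ε)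

def japaneseBracket {E : Type*} [NormedAddCommGroup E] (x : E) : ℝ := √(1 + ‖x‖ ^ 2)

section Laplacian

variable {n : ℕ}

lemma contDiff_lap {k : WithTop ℕ∞} {f : EuclideanSpace ℝ (Fin n) → ℝ}
    (hf : ContDiff ℝ (k + 2) f) : ContDiff ℝ k (lap f) := by
  have hf' : ContDiff ℝ (k + 1) (fderiv ℝ f) := hf.fderiv_right (by
    rw [add_assoc]; norm_num)
  refine ContDiff.sum fun i _ => ?_
  exact ((hf'.clm_apply contDiff_const).fderiv_right le_rfl).clm_apply contDiff_const

lemma fderiv_linear_comb {f g : EuclideanSpace ℝ (Fin n) → ℝ} {x : EuclideanSpace ℝ (Fin n)}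
    (hf : DifferentiableAt ℝ f x) (hg : DifferentiableAt ℝ g x) (a b : ℝ) :
    fderiv ℝ (fun y => a * f y + b * g y) x = a • fderiv ℝ f x + b • fderiv ℝ g x :=
  ((hf.hasFDerivAt.const_mul a).add (hg.hasFDerivAt.const_mul b)).fderiv

lemma lap_linear_comb {f g : EuclideanSpace ℝ (Fin n) → ℝ}
    (hf : ContDiff ℝ 2 f) (hg : ContDiff ℝ 2 g) (a b : ℝ) :
    lap (fun y => a * f y + b * g y) = fun x => a * lap f x + b * lap g x := by
  have hDf : ∀ v, ContDiff ℝ 1 fun y => fderiv ℝ f y v := fun v =>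
    (hf.fderiv_right (by norm_num)).clm_apply contDiff_const
  have hDg : ∀ v, ContDiff ℝ 1 fun y => fderiv ℝ g y v := fun v =>
    (hg.fderiv_right (by norm_num)).clm_apply contDiff_const
  have hD : ∀ v, (fun y => fderiv ℝ (fun y => a * f y + b * g y) y v)
      = fun y => a * fderiv ℝ f y v + b * fderiv ℝ g y v := fun v => funext fun y => by
    rw [fderiv_linear_comb (hf.differentiable two_ne_zero y)
      (hg.differentiable two_ne_zero y)]
    rfl
  funext x
  simp only [lap, hD, fderiv_linear_comb ((hDf _).differentiable one_ne_zero x)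
    ((hDg _).differentiable one_ne_zero x), Finset.mul_sum, ← Finset.sum_add_distrib]
  rfl

lemma lap_radial (h h' h'' : ℝ → ℝ)
    (hh : ∀ t, 1 ≤ t → HasDerivAt h (h' t) t) (hh' : ∀ t, 1 ≤ t → HasDerivAt h' (h'' t) t)
    (x : EuclideanSpace ℝ (Fin n)) :
    lap (fun y => h (1 + ‖y‖ ^ 2)) x
      = 4 * ‖x‖ ^ 2 * h'' (1 + ‖x‖ ^ 2) + 2 * n * h' (1 + ‖x‖ ^ 2) := by
  have hcomp : ∀ (φ φ' : ℝ → ℝ), (∀ t, 1 ≤ t → HasDerivAt φ (φ' t) t) →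
      ∀ y : EuclideanSpace ℝ (Fin n), HasFDerivAt (fun z => φ (1 + ‖z‖ ^ 2))
        (φ' (1 + ‖y‖ ^ 2) • (2 • innerSL ℝ y)) y := fun φ φ' hφ y =>
    (hφ _ (le_add_of_nonneg_right (by positivity))).comp_hasFDerivAt y
      ((hasStrictFDerivAt_norm_sq y).hasFDerivAt.const_add 1)
  have hpartial : ∀ i : Fin n, (fun y => fderiv ℝ (fun z => h (1 + ‖z‖ ^ 2)) y
      (EuclideanSpace.single i 1)) = fun y => h' (1 + ‖y‖ ^ 2) * (2 * y i) := fun i =>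
    funext fun y => by
      rw [(hcomp h h' hh y).fderiv]
      simp [EuclideanSpace.inner_single_right]
  have hsecond : ∀ i : Fin n,
      fderiv ℝ (fun y => h' (1 + ‖y‖ ^ 2) * (2 * y i)) x (EuclideanSpace.single i 1)
        = 4 * h'' (1 + ‖x‖ ^ 2) * x i ^ 2 + 2 * h' (1 + ‖x‖ ^ 2) := fun i => by
    have hcoord : HasFDerivAt (fun y : EuclideanSpace ℝ (Fin n) => 2 * y i)
        ((2 : ℝ) • (EuclideanSpace.proj i : EuclideanSpace ℝ (Fin n) →L[ℝ] ℝ)) x :=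
      (EuclideanSpace.proj i : EuclideanSpace ℝ (Fin n) →L[ℝ] ℝ).hasFDerivAt.const_mul 2
    rw [((hcomp h' h'' hh' x).fun_mul hcoord).fderiv]
    simp only [add_apply, smul_apply,
      PiLp.proj_apply, PiLp.single_eq_same, smul_eq_mul, mul_one, coe_innerSL_apply,
      EuclideanSpace.inner_single_right, Real.ringHom_apply, one_mul, nsmul_eq_mul,
      Nat.cast_ofNat]
    ring
  have hnorm : ∑ i, x i ^ 2 = ‖x‖ ^ 2 := by
    simp [EuclideanSpace.norm_sq_eq, sq_abs]
  simp only [lap, hpartial, hsecond, Finset.sum_add_distrib, ← Finset.mul_sum, hnorm,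
    Finset.sum_const, Finset.card_univ, Fintype.card_fin, nsmul_eq_mul]
  ring

end Laplacian

section JapaneseBracket

variable {E : Type*} [NormedAddCommGroup E]

lemma one_le_japaneseBracket (x : E) : 1 ≤ japaneseBracket x :=
  Real.one_le_sqrt.mpr (le_add_of_nonneg_right (by positivity))

lemma japaneseBracket_rpow (x : E) (q : ℝ) :
    japaneseBracket x ^ q = (1 + ‖x‖ ^ 2) ^ (q / 2) := by
  rw [japaneseBracket, Real.sqrt_eq_rpow, ← Real.rpow_mul (by positivity)]
  ring_nf

lemma contDiff_japaneseBracket_rpow [InnerProductSpace ℝ E] {k : WithTop ℕ∞} (q : ℝ) :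
    ContDiff ℝ k fun x : E => japaneseBracket x ^ q := by
  have hpos : ∀ x : E, 0 < 1 + ‖x‖ ^ 2 := fun x => by positivity
  exact ((contDiff_const.add (contDiff_norm_sq ℝ)).sqrt fun x => (hpos x).ne').rpow_const_of_ne
    fun x => (Real.sqrt_pos.mpr (hpos x)).ne'

end JapaneseBracket

section Bilaplacian

variable {n : ℕ}

lemma lap_japaneseBracket_rpow (q : ℝ) (x : EuclideanSpace ℝ (Fin n)) :
    lap (fun y => japaneseBracket y ^ q) x
      = q * (q + n - 2) * japaneseBracket x ^ (q - 2)
        - q * (q - 2) * japaneseBracket x ^ (q - 4) := by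
  simp only [japaneseBracket_rpow]
  rw [lap_radial (fun t => t ^ (q / 2)) (fun t => q / 2 * t ^ (q / 2 - 1))
    (fun t => q / 2 * ((q / 2 - 1) * t ^ (q / 2 - 1 - 1)))
    (fun t ht => Real.hasDerivAt_rpow_const (Or.inl (by linarith)))
    (fun t ht => (Real.hasDerivAt_rpow_const (Or.inl (by linarith))).const_mul _) x]
  set t := 1 + ‖x‖ ^ 2
  have ht : 0 < t := by positivity
  have hshift : t * t ^ (q / 2 - 1 - 1) = t ^ (q / 2 - 1) := by
    rw [mul_comm, ← Real.rpow_add_one ht.ne']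
    ring_nf
  rw [show (q - 2) / 2 = q / 2 - 1 by ring, show (q - 4) / 2 = q / 2 - 1 - 1 by ring,
    show ‖x‖ ^ 2 = t - 1 by ring]
  linear_combination (q * (q - 2)) * hshift

lemma lap_lap_japaneseBracket_rpow (q : ℝ) (x : EuclideanSpace ℝ (Fin n)) :
    lap (lap fun y => japaneseBracket y ^ q) x
      = q * (q - 2) * (q + n - 2) * (q + n - 4) * japaneseBracket x ^ (q - 4)
        - 2 * q * (q - 2) * (q - 4) * (q + n - 4) * japaneseBracket x ^ (q - 6)
        + q * (q - 2) * (q - 4) * (q - 6) * japaneseBracket x ^ (q - 8) := by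
  have hlap : lap (fun y => japaneseBracket y ^ q) = fun y =>
      q * (q + n - 2) * japaneseBracket y ^ (q - 2)
        + -(q * (q - 2)) * japaneseBracket y ^ (q - 4) :=
    funext fun y => by rw [lap_japaneseBracket_rpow]; ring
  rw [hlap, lap_linear_comb (contDiff_japaneseBracket_rpow _) (contDiff_japaneseBracket_rpow _)]
  simp only [lap_japaneseBracket_rpow]
  rw [show q - 2 - 2 = q - 4 by ring, show q - 2 - 4 = q - 6 by ring,
    show q - 4 - 2 = q - 6 by ring, show q - 4 - 4 = q - 8 by ring]
  ring

lemma aWeight_eq_linear_comb (ε : ℝ) :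
    (aWeight ε : EuclideanSpace ℝ (Fin n) → ℝ)
      = fun y => 1 * japaneseBracket y ^ (1 : ℝ) + -ε * japaneseBracket y ^ (1 - ε) :=
  funext fun y => by simp only [aWeight, japaneseBracket, Real.rpow_one]; ring

lemma neg_lap_lap_aWeight (ε : ℝ) (x : EuclideanSpace ℝ (Fin n)) :
    -lap (lap (aWeight ε)) x
      = ((n - 1) * (n - 3) * japaneseBracket x ^ (-3 : ℝ)
          - ε * (1 - ε ^ 2) * (n - 1 - ε) * (n - 3 - ε) * japaneseBracket x ^ (-(3 + ε)))
        + (6 * (n - 3) * japaneseBracket x ^ (-5 : ℝ)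
          - 2 * ε * (1 - ε ^ 2) * (3 + ε) * (n - 3 - ε) * japaneseBracket x ^ (-(5 + ε)))
        + (15 * japaneseBracket x ^ (-7 : ℝ)
          - ε * (1 - ε ^ 2) * (3 + ε) * (5 + ε) * japaneseBracket x ^ (-(7 + ε))) := by
  have hsmooth : ∀ q : ℝ, ContDiff ℝ 2 (lap fun y : EuclideanSpace ℝ (Fin n) =>
      japaneseBracket y ^ q) := fun q => contDiff_lap (contDiff_japaneseBracket_rpow q)
  rw [aWeight_eq_linear_comb, lap_linear_comb (contDiff_japaneseBracket_rpow _)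
    (contDiff_japaneseBracket_rpow _), lap_linear_comb (hsmooth _) (hsmooth _)]
  dsimp only
  rw [lap_lap_japaneseBracket_rpow, lap_lap_japaneseBracket_rpow,
    show (1 : ℝ) - 4 = -3 by norm_num, show (1 : ℝ) - 6 = -5 by norm_num,
    show (1 : ℝ) - 8 = -7 by norm_num, show 1 - ε - 4 = -(3 + ε) by ring,
    show 1 - ε - 6 = -(5 + ε) by ring, show 1 - ε - 8 = -(7 + ε) by ring]
  ring

end Bilaplacian

lemma sub_mul_rpow_le {s α β k ε : ℝ} (hs : 1 ≤ s) (hα : 0 ≤ α) (hε : 0 ≤ ε) :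
    (α - β) * s ^ (-(k + ε)) ≤ α * s ^ (-k) - β * s ^ (-(k + ε)) := by
  have hpow : s ^ (-(k + ε)) ≤ s ^ (-k) := Real.rpow_le_rpow_of_exponent_le hs (by linarith)
  nlinarith [mul_le_mul_of_nonneg_left hpow hα]

lemma mul_one_sub_sq_le_half {ε : ℝ} (h0 : 0 ≤ ε) (h1 : ε ≤ 1) : ε * (1 - ε ^ 2) ≤ 1 / 2 := by
  nlinarith [sq_nonneg (1 - 2 * ε), mul_nonneg h0 (sub_nonneg.2 h1)]

section Coefficients

variable {N ε : ℝ}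

lemma coeff_rpow_neg_three_pos (hN : 3 ≤ N) (hε : 0 < ε) (hε1 : ε < 1) :
    0 < (N - 1) * (N - 3) - ε * (1 - ε ^ 2) * (N - 1 - ε) * (N - 3 - ε) := by
  have hu := mul_one_sub_sq_le_half hε.le hε1.le
  have hu0 : 0 < ε * (1 - ε ^ 2) := mul_pos hε (by nlinarith)
  have key : (N - 1) * (N - 3) - ε * (1 - ε ^ 2) * (N - 1 - ε) * (N - 3 - ε)
      = (N - 1) * (N - 3) * (1 - ε * (1 - ε ^ 2)) + ε * (1 - ε ^ 2) * ε * (2 * N - 4 - ε) := by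
    ring
  rw [key]
  exact add_pos_of_nonneg_of_pos
    (mul_nonneg (mul_nonneg (by linarith) (by linarith)) (by linarith))
    (mul_pos (mul_pos hu0 hε) (by linarith))

lemma coeff_rpow_neg_five_nonneg (hN : 3 ≤ N) (hε : 0 < ε) (hε1 : ε < 1) :
    0 ≤ 6 * (N - 3) - 2 * ε * (1 - ε ^ 2) * (3 + ε) * (N - 3 - ε) := by
  have hu := mul_one_sub_sq_le_half hε.le hε1.le
  have hu0 : 0 < ε * (1 - ε ^ 2) := mul_pos hε (by nlinarith)
  nlinarith [mul_nonneg (mul_nonneg hu0.le (by linarith : (0 : ℝ) ≤ N - 3))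
      (by linarith : (0 : ℝ) ≤ 1 - ε),
    mul_pos (mul_pos hu0 hε) (by linarith : (0 : ℝ) < 3 + ε)]

lemma coeff_rpow_neg_seven_nonneg (hε : 0 < ε) (hε1 : ε < 1) :
    0 ≤ 15 - ε * (1 - ε ^ 2) * (3 + ε) * (5 + ε) := by
  have hu := mul_one_sub_sq_le_half hε.le hε1.le
  nlinarith [mul_le_mul hu (by nlinarith : (3 + ε) * (5 + ε) ≤ 24) (by positivity) (by norm_num)]

end Coefficients

theorem stmt7 (n : ℕ) (hn : 3 ≤ n) :
    ∃ ε₀ : ℝ, 0 < ε₀ ∧ ∀ ε : ℝ, 0 < ε → ε < ε₀ →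
      ∃ c : ℝ, 0 < c ∧ ∀ x : EuclideanSpace ℝ (Fin n),
        c * Real.sqrt (1 + ‖x‖ ^ 2) ^ (-(3 + ε)) ≤ - lap (lap (aWeight ε)) x := by
  have hN : (3 : ℝ) ≤ n := by exact_mod_cast hn
  refine ⟨1, one_pos, fun ε hε hε1 => ⟨_, coeff_rpow_neg_three_pos hN hε hε1, fun x => ?_⟩⟩
  have hx := one_le_japaneseBracket x
  have hx0 : 0 ≤ japaneseBracket x := zero_le_one.trans hx
  have h5 := mul_nonneg (coeff_rpow_neg_five_nonneg hN hε hε1) (Real.rpow_nonneg hx0 (-(5 + ε)))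
  have h7 := mul_nonneg (coeff_rpow_neg_seven_nonneg hε hε1) (Real.rpow_nonneg hx0 (-(7 + ε)))
  show _ * japaneseBracket x ^ _ ≤ _
  rw [neg_lap_lap_aWeight]
  refine le_trans ?_ (add_le_add (add_le_add
    (sub_mul_rpow_le hx (mul_nonneg (by linarith) (by linarith)) hε.le)
    (sub_mul_rpow_le hx (by linarith) hε.le)) (sub_mul_rpow_le hx (by norm_num) hε.le))
  linarith
end
end

section
/- Let n ≥ 3, let ε > 0 be sufficiently small depending on n, and let a(x) := ⟨x⟩ - ε⟨x⟩^{1-ε}. Then the Hessian of a is positive definite with the quantitative lower bound: for every x ∈ ℝ^n and every real vector v ∈ ℝ^n, one has ∂_j∂_k a(x) v_j v_k ≳ |v|² ⟨x⟩^{-(1+ε)}. -/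
open MeasureTheory

noncomputable section

/-!
The weight is radial, `a(x) = g(‖x‖²)` with `g(t) = (1+t)^{1/2} - ε(1+t)^{(1-ε)/2}`, so its Hessian
form is `2 g'(‖x‖²) ‖v‖² + 4 g''(‖x‖²) ⟪x, v⟫²`. The coefficient of `⟪x, v⟫²` is negative, so
Cauchy–Schwarz `⟪x, v⟫² ≤ (⟨x⟩² - 1) ‖v‖²` bounds the form from below by
`(ε²(1-ε) ⟨x⟩^{-1-ε} + (1 - ε(1-ε²)⟨x⟩^{-ε}) ⟨x⟩^{-3}) ‖v‖²`, and the second summand is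
nonnegative for every `0 < ε < 1`; hence `ε₀ = 1` and `c = ε²(1-ε)`.
-/

open RealInnerProductSpace

section RadialHessian

variable {E : Type*} [NormedAddCommGroup E] [InnerProductSpace ℝ E] {g g' g'' : ℝ → ℝ}

theorem hasFDerivAt_comp_norm_sq (hg : ∀ t, 0 ≤ t → HasDerivAt g (g' t) t) (x : E) :
    HasFDerivAt (fun y => g (‖y‖ ^ 2)) (g' (‖x‖ ^ 2) • (2 • innerSL ℝ x)) x :=
  (hg _ (sq_nonneg _)).comp_hasFDerivAt x (hasFDerivAt_id x).norm_sq

theorem fderiv_comp_norm_sq_apply (hg : ∀ t, 0 ≤ t → HasDerivAt g (g' t) t) (x v : E) :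
    fderiv ℝ (fun y => g (‖y‖ ^ 2)) x v = 2 * g' (‖x‖ ^ 2) * ⟪x, v⟫ := by
  rw [(hasFDerivAt_comp_norm_sq hg x).fderiv]
  simp only [smul_apply, innerSL_apply_apply, smul_eq_mul, nsmul_eq_mul]
  ring

theorem fderiv_fderiv_comp_norm_sq_apply (hg : ∀ t, 0 ≤ t → HasDerivAt g (g' t) t)
    (hg' : ∀ t, 0 ≤ t → HasDerivAt g' (g'' t) t) (x v : E) :
    fderiv ℝ (fun y => fderiv ℝ (fun z => g (‖z‖ ^ 2)) y v) x v
      = 2 * g' (‖x‖ ^ 2) * ‖v‖ ^ 2 + 4 * g'' (‖x‖ ^ 2) * ⟪x, v⟫ ^ 2 := by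
  simp_rw [fderiv_comp_norm_sq_apply hg]
  have h : HasFDerivAt (fun y => 2 * g' (‖y‖ ^ 2) * ⟪y, v⟫) _ x :=
    ((hasFDerivAt_comp_norm_sq hg' x).const_mul 2).mul
      ((hasFDerivAt_id x).inner ℝ (hasFDerivAt_const v x))
  rw [h.fderiv]
  simp only [add_apply, smul_apply, ContinuousLinearMap.comp_apply, ContinuousLinearMap.prod_apply,
    ContinuousLinearMap.id_apply, zero_apply, fderivInnerCLM_apply, inner_zero_right,
    real_inner_self_eq_norm_sq, id_eq, zero_add, smul_eq_mul, coe_innerSL_apply, nsmul_eq_mul]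
  ring

end RadialHessian

theorem hasDerivAt_one_add_rpow (p : ℝ) {t : ℝ} (ht : 0 ≤ t) :
    HasDerivAt (fun t => (1 + t) ^ p) (p * (1 + t) ^ (p - 1)) t := by
  simpa using ((hasDerivAt_id t).const_add 1).rpow_const (p := p) (Or.inl (by positivity))

theorem rpow_one_add_norm_sq_eq {E : Type*} [NormedAddCommGroup E] (x : E) (r : ℝ) :
    (1 + ‖x‖ ^ 2) ^ r = Real.sqrt (1 + ‖x‖ ^ 2) ^ (2 * r) := by
  rw [Real.sqrt_eq_rpow, ← Real.rpow_mul (by positivity)]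
  ring_nf

def aWeightProfile (ε t : ℝ) : ℝ := (1 + t) ^ (1 / 2 : ℝ) - ε * (1 + t) ^ ((1 - ε) / 2)

theorem aWeight_eq_comp_norm_sq {n : ℕ} (ε : ℝ) :
    aWeight (n := n) ε = fun y => aWeightProfile ε (‖y‖ ^ 2) := by
  funext y
  have hy : (0 : ℝ) ≤ 1 + ‖y‖ ^ 2 := by positivity
  simp only [aWeight, aWeightProfile, Real.sqrt_eq_rpow, ← Real.rpow_mul hy]
  ring_nf

theorem hasDerivAt_aWeightProfile (ε t : ℝ) (ht : 0 ≤ t) :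
    HasDerivAt (aWeightProfile ε)
      (1 / 2 * (1 + t) ^ ((1 : ℝ) / 2 - 1) - ε * ((1 - ε) / 2 * (1 + t) ^ ((1 - ε) / 2 - 1))) t :=
  (hasDerivAt_one_add_rpow _ ht).sub ((hasDerivAt_one_add_rpow _ ht).const_mul ε)

theorem hasDerivAt_aWeightProfile_deriv (ε t : ℝ) (ht : 0 ≤ t) :
    HasDerivAt
      (fun t => 1 / 2 * (1 + t) ^ ((1 : ℝ) / 2 - 1)
        - ε * ((1 - ε) / 2 * (1 + t) ^ ((1 - ε) / 2 - 1)))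
      (1 / 2 * (((1 : ℝ) / 2 - 1) * (1 + t) ^ ((1 : ℝ) / 2 - 1 - 1))
        - ε * ((1 - ε) / 2 * (((1 - ε) / 2 - 1) * (1 + t) ^ ((1 - ε) / 2 - 1 - 1)))) t :=
  ((hasDerivAt_one_add_rpow _ ht).const_mul _).sub
    (((hasDerivAt_one_add_rpow _ ht).const_mul _).const_mul ε)

theorem fderiv_fderiv_aWeight_apply {n : ℕ} (ε : ℝ) (x v : EuclideanSpace ℝ (Fin n)) :
    fderiv ℝ (fun y => fderiv ℝ (aWeight ε) y v) x v
      = (Real.sqrt (1 + ‖x‖ ^ 2) ^ (-1 : ℝ) - ε * (1 - ε) * Real.sqrt (1 + ‖x‖ ^ 2) ^ (-(1 + ε)))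
          * ‖v‖ ^ 2
        + (ε * (1 - ε) * (1 + ε) * Real.sqrt (1 + ‖x‖ ^ 2) ^ (-(3 + ε))
          - Real.sqrt (1 + ‖x‖ ^ 2) ^ (-3 : ℝ)) * ⟪x, v⟫ ^ 2 := by
  rw [aWeight_eq_comp_norm_sq, fderiv_fderiv_comp_norm_sq_apply (hasDerivAt_aWeightProfile ε)
    (hasDerivAt_aWeightProfile_deriv ε)]
  simp only [rpow_one_add_norm_sq_eq]
  rw [show 2 * ((1 : ℝ) / 2 - 1) = -1 by norm_num, show 2 * ((1 - ε) / 2 - 1) = -(1 + ε) by ring,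
    show 2 * ((1 : ℝ) / 2 - 1 - 1) = -3 by norm_num,
    show 2 * ((1 - ε) / 2 - 1 - 1) = -(3 + ε) by ring]
  ring

theorem hessian_form_lower_bound {ε s V p : ℝ} (hε : 0 < ε) (hε1 : ε < 1) (hs : 1 ≤ s)
    (hV : 0 ≤ V) (hp : p ^ 2 ≤ (s ^ 2 - 1) * V) :
    ε ^ 2 * (1 - ε) * V * s ^ (-(1 + ε))
      ≤ (s ^ (-1 : ℝ) - ε * (1 - ε) * s ^ (-(1 + ε))) * V
        + (ε * (1 - ε) * (1 + ε) * s ^ (-(3 + ε)) - s ^ (-3 : ℝ)) * p ^ 2 := by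
  have hs0 : 0 < s := by linarith
  set a := s⁻¹ with ha
  set u := s ^ (-ε)
  have has : a * s = 1 := inv_mul_cancel₀ hs0.ne'
  have ha0 : 0 ≤ a := by positivity
  have hu0 : 0 ≤ u := by positivity
  have hu1 : u ≤ 1 := Real.rpow_le_one_of_one_le_of_nonpos hs (by linarith)
  have h1 : s ^ (-1 : ℝ) = a := Real.rpow_neg_one s
  have h3 : s ^ (-3 : ℝ) = a ^ 3 := by
    rw [Real.rpow_neg hs0.le, ha, inv_pow]; norm_cast
  have h1ε : s ^ (-(1 + ε)) = a * u := by
    rw [neg_add, Real.rpow_add hs0, h1]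
  have h3ε : s ^ (-(3 + ε)) = a ^ 3 * u := by
    rw [neg_add, Real.rpow_add hs0, h3]
  rw [h1, h3, h1ε, h3ε]
  clear_value a u
  have hk : 0 ≤ 1 - ε * (1 - ε) * (1 + ε) * u := by
    have hc : ε * (1 - ε) * (1 + ε) ≤ 1 := by nlinarith [pow_pos hε 3]
    nlinarith [mul_le_mul hc hu1 hu0 zero_le_one]
  set k := 1 - ε * (1 - ε) * (1 + ε) * u
  calc ε ^ 2 * (1 - ε) * V * (a * u)
      ≤ ε ^ 2 * (1 - ε) * V * (a * u) + a ^ 3 * k * V := le_add_of_nonneg_right (by positivity)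
    _ = (a - ε * (1 - ε) * (a * u)) * V - a ^ 3 * k * ((s ^ 2 - 1) * V) := by
      linear_combination (a * k * V * (a * s + 1)) * has
    _ ≤ _ := by linear_combination (a ^ 3 * k) * hp

theorem stmt8_general (n : ℕ) :
    ∃ ε₀ : ℝ, 0 < ε₀ ∧ ∀ ε : ℝ, 0 < ε → ε < ε₀ →
      ∃ c : ℝ, 0 < c ∧ ∀ x v : EuclideanSpace ℝ (Fin n),
        c * ‖v‖ ^ 2 * Real.sqrt (1 + ‖x‖ ^ 2) ^ (-(1 + ε))
          ≤ fderiv ℝ (fun y => fderiv ℝ (aWeight ε) y v) x v := by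
  refine ⟨1, one_pos, fun ε hε hε1 =>
    ⟨ε ^ 2 * (1 - ε), mul_pos (by positivity) (by linarith), fun x v => ?_⟩⟩
  have hcs : ⟪x, v⟫ ^ 2 ≤ (Real.sqrt (1 + ‖x‖ ^ 2) ^ 2 - 1) * ‖v‖ ^ 2 := by
    rw [Real.sq_sqrt (by positivity), add_sub_cancel_left, ← mul_pow, ← sq_abs]
    exact pow_le_pow_left₀ (abs_nonneg _) (abs_real_inner_le_norm x v) 2
  rw [fderiv_fderiv_aWeight_apply]
  exact hessian_form_lower_bound hε hε1 (Real.one_le_sqrt.2 (by simp)) (by positivity) hcs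

theorem stmt8 (n : ℕ) (hn : 3 ≤ n) :
    ∃ ε₀ : ℝ, 0 < ε₀ ∧ ∀ ε : ℝ, 0 < ε → ε < ε₀ →
      ∃ c : ℝ, 0 < c ∧ ∀ x v : EuclideanSpace ℝ (Fin n),
        c * ‖v‖ ^ 2 * Real.sqrt (1 + ‖x‖ ^ 2) ^ (-(1 + ε))
          ≤ fderiv ℝ (fun y => fderiv ℝ (aWeight ε) y v) x v :=
  stmt8_general n
end
end

section
/- Let n ≥ 3, let ε > 0 be sufficiently small depending on n, and let a(x) := ⟨x⟩ - ε⟨x⟩^{1-ε}. Then Δa(x) ≳_ε ⟨x⟩^{-(1+ε)} for all x ∈ ℝ^n, where Δa(x) = n/⟨x⟩ - |x|²/⟨x⟩³ - ε(1-ε)n/⟨x⟩^{1+ε} + ε(1-ε)(1+ε)|x|²/⟨x⟩^{3+ε}. -/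
open MeasureTheory

noncomputable section

/-
With s = ⟨x⟩ ≥ 1 and s² = 1 + |x|², the first two terms equal (n - 1)/s + 1/s³ ≥ (n - 1)/s, the third
is at most ε n / s, and the fourth is nonnegative. Hence Δa ≥ (n - 1 - ε n)/s ≥ 1/(2s) ≥ s^{-(1+ε)}/2
once ε < 1/(2n).
-/

namespace JapaneseBracket

lemma rpow_neg_one_add_le_inv {s ε : ℝ} (hs : 1 ≤ s) (hε : 0 ≤ ε) :
    s ^ (-(1 + ε)) ≤ s⁻¹ := by
  rw [← Real.rpow_neg_one]
  exact Real.rpow_le_rpow_of_exponent_le hs (by linarith)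

lemma div_rpow_one_add_le {a s ε : ℝ} (ha : 0 ≤ a) (hs : 1 ≤ s) (hε : 0 ≤ ε) :
    a / s ^ (1 + ε) ≤ a / s := by
  refine div_le_div_of_nonneg_left ha (by linarith) ?_
  simpa using Real.rpow_le_rpow_of_exponent_le hs (by linarith : (1 : ℝ) ≤ 1 + ε)

lemma sub_one_div_le_div_sub_div_rpow_three {n s t : ℝ} (hs : 1 ≤ s) (hst : s ^ 2 = 1 + t) :
    (n - 1) / s ≤ n / s - t / s ^ (3 : ℝ) := by
  have hs0 : 0 < s := by linarith
  have hcube : t / s ^ (3 : ℝ) = 1 / s - 1 / s ^ 3 := by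
    rw [show (3 : ℝ) = ((3 : ℕ) : ℝ) by norm_num, Real.rpow_natCast]
    field_simp
    linear_combination -hst
  rw [hcube, sub_div]
  have : 0 ≤ 1 / s ^ 3 := by positivity
  linarith

lemma sub_one_sub_mul_div_le_laplacian {n ε s t : ℝ} (hn : 0 ≤ n) (hε : 0 < ε) (hε1 : ε < 1)
    (hs : 1 ≤ s) (ht : 0 ≤ t) (hst : s ^ 2 = 1 + t) :
    (n - 1 - ε * n) / s ≤ n / s - t / s ^ (3 : ℝ) - ε * (1 - ε) * n / s ^ (1 + ε)
      + ε * (1 - ε) * (1 + ε) * t / s ^ (3 + ε) := by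
  have hfirst := sub_one_div_le_div_sub_div_rpow_three (n := n) hs hst
  have hthird : ε * (1 - ε) * n / s ^ (1 + ε) ≤ ε * n / s :=
    calc ε * (1 - ε) * n / s ^ (1 + ε) ≤ ε * (1 - ε) * n / s := by
          refine div_rpow_one_add_le ?_ hs hε.le
          have : 0 ≤ 1 - ε := by linarith
          positivity
      _ ≤ ε * n / s := by
          gcongr
          nlinarith
  have hfourth : 0 ≤ ε * (1 - ε) * (1 + ε) * t / s ^ (3 + ε) := by
    have : 0 ≤ 1 - ε := by linarith
    have : 0 < s := by linarith
    positivity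
  have hsplit : (n - 1 - ε * n) / s = (n - 1) / s - ε * n / s := by ring
  linarith

end JapaneseBracket

open JapaneseBracket in
theorem stmt9 (n : ℕ) (hn : 3 ≤ n) :
    ∃ ε₀ : ℝ, 0 < ε₀ ∧ ∀ ε : ℝ, 0 < ε → ε < ε₀ →
      ∃ c : ℝ, 0 < c ∧ ∀ x : EuclideanSpace ℝ (Fin n),
        c * Real.sqrt (1 + ‖x‖ ^ 2) ^ (-(1 + ε))
          ≤ (n : ℝ) / Real.sqrt (1 + ‖x‖ ^ 2)
            - ‖x‖ ^ 2 / Real.sqrt (1 + ‖x‖ ^ 2) ^ (3 : ℝ)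
            - ε * (1 - ε) * (n : ℝ) / Real.sqrt (1 + ‖x‖ ^ 2) ^ (1 + ε)
            + ε * (1 - ε) * (1 + ε) * ‖x‖ ^ 2 / Real.sqrt (1 + ‖x‖ ^ 2) ^ (3 + ε) := by
  have hn3 : (3 : ℝ) ≤ n := by exact_mod_cast hn
  refine ⟨1 / (2 * n), by positivity, fun ε hε hεε₀ => ⟨1 / 2, by norm_num, fun x => ?_⟩⟩
  have hεn : ε * n < 1 / 2 := by
    rw [lt_div_iff₀ (by positivity)] at hεε₀
    linarith
  have hε1 : ε < 1 := by nlinarith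
  set t := ‖x‖ ^ 2
  have ht : 0 ≤ t := by positivity
  set s := Real.sqrt (1 + t)
  have hs : 1 ≤ s := Real.one_le_sqrt.mpr (by linarith)
  have hst : s ^ 2 = 1 + t := Real.sq_sqrt (by linarith)
  calc 1 / 2 * s ^ (-(1 + ε)) ≤ 1 / 2 * s⁻¹ := by
        gcongr
        exact rpow_neg_one_add_le_inv hs hε.le
    _ ≤ (n - 1 - ε * n) / s := by
        rw [div_eq_mul_inv]
        exact mul_le_mul_of_nonneg_right (by linarith) (by positivity)
    _ ≤ _ := sub_one_sub_mul_div_le_laplacian (by positivity) hε hε1 hs ht hst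
end
end
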